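/- There exists a constant c > 0 such that the following holds. Let S be a finite set of n axis-aligned squares whose side lengths all lie in [d, ψ·d] for some d > 0 and ψ ≥ 1. For each ordered pair (C₁, C₂) of storing cells of S with C₂ ∈ 𝒫(π(C₁)), let M_{C₁,C₂} ⊆ π(C₁) × π(C₂) be a partial matching, i.e., a set of pairs such that every square of S occurs as a coordinate of at most one pair of M_{C₁,C₂}. Then the total number of pairs, Σ_{(C₁,C₂)} |M_{C₁,C₂}| summed over all such ordered pairs, is at most c·n·(log₂ψ + 1). -/
import Mathlib


open Set

/-- A dyadic cell at level `level` (side length `2^level`) with lower-left corner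
`(a·2^level, b·2^level)`. -/
structure DyadicCell where
  level : ℤ
  a : ℤ
  b : ℤ
deriving DecidableEq

/-- The side length of a dyadic cell. -/
noncomputable def DyadicCell.side (C : DyadicCell) : ℝ := 2 ^ C.level

/-- The dyadic cell as a subset of the plane. -/
noncomputable def DyadicCell.toSet (C : DyadicCell) : Set (ℝ × ℝ) :=
  Set.Icc ((C.a : ℝ) * 2 ^ C.level) ((C.a + 1 : ℝ) * 2 ^ C.level) ×ˢ
    Set.Icc ((C.b : ℝ) * 2 ^ C.level) ((C.b + 1 : ℝ) * 2 ^ C.level)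

/-- `5C`: the square obtained by scaling the cell `C` by a factor `5` about its center. -/
noncomputable def DyadicCell.scale5 (C : DyadicCell) : Set (ℝ × ℝ) :=
  Set.Icc ((C.a - 2 : ℝ) * 2 ^ C.level) ((C.a + 3 : ℝ) * 2 ^ C.level) ×ˢ
    Set.Icc ((C.b - 2 : ℝ) * 2 ^ C.level) ((C.b + 3 : ℝ) * 2 ^ C.level)

/-- An axis-aligned square `[x, x+s] × [y, y+s]` of side length `s > 0`. -/
structure Square where
  x : ℝ
  y : ℝ
  s : ℝ
  s_pos : 0 < s

/-- The square as a subset of the plane. -/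
noncomputable def Square.toSet (σ : Square) : Set (ℝ × ℝ) :=
  Set.Icc σ.x (σ.x + σ.s) ×ˢ Set.Icc σ.y (σ.y + σ.s)

/-- The center of a square. -/
noncomputable def Square.center (σ : Square) : ℝ × ℝ := (σ.x + σ.s / 2, σ.y + σ.s / 2)

/-- `C` is a storing cell of `σ`: a dyadic cell of maximal side length among those that
contain the center of `σ` and are contained in `σ`. -/
def IsStoringCell (σ : Square) (C : DyadicCell) : Prop :=
  σ.center ∈ C.toSet ∧ C.toSet ⊆ σ.toSet ∧
    ∀ D : DyadicCell, σ.center ∈ D.toSet → D.toSet ⊆ σ.toSet → D.side ≤ C.side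

/-- `C` is a storing cell of the set `S` (with fixed storing-cell choice `c`):
some square of `S` is stored in `C`. -/
def IsStoringCellOf (S : Finset Square) (c : Square → DyadicCell) (C : DyadicCell) : Prop :=
  ∃ σ ∈ S, c σ = C

/-- `π(C)`: the squares of `S` stored in `C`. -/
def piCell (S : Finset Square) (c : Square → DyadicCell) (C : DyadicCell) : Set Square :=
  {σ | σ ∈ S ∧ c σ = C}

/-- `𝒞(σ)`: the dyadic cells `D ⊆ σ` containing at least one storing cell of `S`,
maximal with both properties. -/
def calC (S : Finset Square) (c : Square → DyadicCell) (σ : Square) : Set DyadicCell :=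
  {D | D.toSet ⊆ σ.toSet ∧ (∃ E, IsStoringCellOf S c E ∧ E.toSet ⊆ D.toSet) ∧
    ¬ ∃ D' : DyadicCell, D.toSet ⊂ D'.toSet ∧ D'.toSet ⊆ σ.toSet ∧
      ∃ E, IsStoringCellOf S c E ∧ E.toSet ⊆ D'.toSet}

/-- `𝒫(γ)`: the storing cells `D` of `S` with `side(D) ≤ side(γ)` such that `5D`
intersects the boundary of `γ`. -/
def calP (S : Finset Square) (c : Square → DyadicCell) (γ : Square) : Set DyadicCell :=
  {D | IsStoringCellOf S c D ∧ D.side ≤ γ.s ∧ (D.scale5 ∩ frontier γ.toSet).Nonempty}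

lemma two_zpow_pos (l : ℤ) : (0:ℝ) < 2 ^ l := by positivity

lemma corner_mem (C : DyadicCell) :
    ((C.a : ℝ) * 2 ^ C.level, (C.b : ℝ) * 2 ^ C.level) ∈ C.toSet := by
  have := two_zpow_pos C.level
  exact ⟨⟨le_refl _, by simp only; nlinarith⟩, ⟨le_refl _, by simp only; nlinarith⟩⟩

lemma corner_mem' (C : DyadicCell) :
    (((C.a : ℝ) + 1) * 2 ^ C.level, ((C.b : ℝ) + 1) * 2 ^ C.level) ∈ C.toSet := by
  have := two_zpow_pos C.level
  exact ⟨⟨by simp only; nlinarith, le_refl _⟩, ⟨by simp only; nlinarith, le_refl _⟩⟩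

lemma storing_side_le {σ : Square} {C : DyadicCell} (h : IsStoringCell σ C) :
    C.side ≤ σ.s := by
  have h1 := h.2.1 (corner_mem C)
  have h2 := h.2.1 (corner_mem' C)
  have a1 : σ.x ≤ (C.a : ℝ) * 2 ^ C.level := h1.1.1
  have a2 : ((C.a : ℝ) + 1) * 2 ^ C.level ≤ σ.x + σ.s := h2.1.2
  unfold DyadicCell.side
  nlinarith [two_zpow_pos C.level]

lemma storing_quarter_lt {σ : Square} {C : DyadicCell} (h : IsStoringCell σ C) :
    σ.s / 4 < C.side := by
  set l : ℤ := Int.log 2 (σ.s / 2) with hl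
  have hs2 : (0:ℝ) < σ.s / 2 := by linarith [σ.s_pos]
  have hub : (2:ℝ) ^ l ≤ σ.s / 2 := Int.zpow_log_le_self (by norm_num) hs2
  have hlb : σ.s / 2 < (2:ℝ) ^ (l + 1) := Int.lt_zpow_succ_log_self (by norm_num) _
  have hl1 : (2:ℝ) ^ (l+1) = 2 * 2 ^ l := by
    rw [zpow_add₀ (by norm_num : (2:ℝ) ≠ 0)]; ring
  have hpos := two_zpow_pos l
  set cx := σ.x + σ.s / 2 with hcx
  set cy := σ.y + σ.s / 2 with hcy
  set D : DyadicCell := ⟨l, ⌊cx / 2 ^ l⌋, ⌊cy / 2 ^ l⌋⟩ with hD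
  have key : ∀ t : ℝ, (⌊t / 2 ^ l⌋ : ℝ) * 2 ^ l ≤ t ∧ t < ((⌊t / 2 ^ l⌋ : ℝ) + 1) * 2 ^ l
      ∧ t - 2 ^ l < (⌊t / 2 ^ l⌋ : ℝ) * 2 ^ l := by
    intro t
    have h1 : (⌊t / 2 ^ l⌋ : ℝ) ≤ t / 2 ^ l := Int.floor_le _
    have h2 : t / 2 ^ l < (⌊t / 2 ^ l⌋ : ℝ) + 1 := Int.lt_floor_add_one _
    refine ⟨?_, ?_, ?_⟩
    · calc (⌊t / 2 ^ l⌋ : ℝ) * 2 ^ l ≤ (t / 2 ^ l) * 2 ^ l := by nlinarith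
        _ = t := by field_simp
    · calc t = (t / 2 ^ l) * 2 ^ l := by field_simp
        _ < ((⌊t / 2 ^ l⌋ : ℝ) + 1) * 2 ^ l := by nlinarith
    · have : t / 2 ^ l - 1 < (⌊t / 2 ^ l⌋ : ℝ) := by linarith
      calc t - 2 ^ l = (t / 2 ^ l - 1) * 2 ^ l := by field_simp
        _ < (⌊t / 2 ^ l⌋ : ℝ) * 2 ^ l := by nlinarith
  have hmem : σ.center ∈ D.toSet := by
    exact ⟨⟨(key cx).1, le_of_lt (key cx).2.1⟩, ⟨(key cy).1, le_of_lt (key cy).2.1⟩⟩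
  have hsub : D.toSet ⊆ σ.toSet := by
    apply Set.prod_mono <;> apply Set.Icc_subset_Icc
    · linarith [(key cx).2.2]
    · push_cast; nlinarith [(key cx).1, hub]
    · linarith [(key cy).2.2]
    · push_cast; nlinarith [(key cy).1, hub]
  have hDs : (2:ℝ) ^ l ≤ C.side := h.2.2 D hmem hsub
  linarith

open scoped Classical in
lemma count_bound
    (S : Finset Square) (c : Square → DyadicCell)
    (hst : ∀ σ ∈ S, IsStoringCell σ (c σ))
    (d ψ : ℝ) (hd : 0 < d) (hψ : 1 ≤ ψ)
    (hside : ∀ σ ∈ S, d ≤ σ.s ∧ σ.s ≤ ψ * d)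
    (M : DyadicCell → DyadicCell → Finset (Square × Square))
    (hMzero : ∀ C₁ C₂, ¬ (IsStoringCellOf S c C₁ ∧ IsStoringCellOf S c C₂ ∧
        ∃ γ ∈ piCell S c C₁, C₂ ∈ calP S c γ) → M C₁ C₂ = ∅)
    (C₂ : DyadicCell) :
    (((S.image c).filter (fun C₁ => M C₁ C₂ ≠ ∅)).card : ℝ) ≤
      1444 * (Real.logb 2 ψ + 1) := by
  have hψ0 : (0:ℝ) < ψ := lt_of_lt_of_le one_pos hψ
  have hlog0 : 0 ≤ Real.logb 2 ψ := Real.logb_nonneg (by norm_num) hψ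
  have hfl0 : 0 ≤ ⌊Real.logb 2 ψ⌋ := Int.floor_nonneg.mpr hlog0
  set l₂ := C₂.level with hl₂
  set m : ℤ := 2 + ⌊Real.logb 2 ψ⌋ with hm
  set X : ℝ := ((C₂.a : ℝ) - 2) * 2 ^ l₂ with hX
  set Y : ℝ := ((C₂.a : ℝ) + 3) * 2 ^ l₂ with hY
  set U : ℝ := ((C₂.b : ℝ) - 2) * 2 ^ l₂ with hU
  set V : ℝ := ((C₂.b : ℝ) + 3) * 2 ^ l₂ with hV
  set F : Finset DyadicCell := (Finset.Icc (l₂ - 1) (l₂ + m)).biUnion (fun l =>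
    ((Finset.Icc ⌈X / 2 ^ l - 4⌉ ⌊Y / 2 ^ l + 4⌋) ×ˢ
     (Finset.Icc ⌈U / 2 ^ l - 4⌉ ⌊V / 2 ^ l + 4⌋)).image
      (fun q => DyadicCell.mk l q.1 q.2)) with hF
  have hsub : (S.image c).filter (fun C₁ => M C₁ C₂ ≠ ∅) ⊆ F := by
    intro C₁ hC₁
    rw [Finset.mem_filter] at hC₁
    obtain ⟨hC₁im, hne⟩ := hC₁
    have hP := not_not.mp (mt (hMzero C₁ C₂) hne)
    obtain ⟨hS1, hS2, γ, hγπ, hγP⟩ := hP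
    obtain ⟨hγS, hγc⟩ := hγπ
    obtain ⟨hPst, hPside, p, hp5, hpfr⟩ := hγP
    have hstγ := hst γ hγS
    rw [hγc] at hstγ
    have h1u : C₁.side ≤ γ.s := storing_side_le hstγ
    have h1l : γ.s / 4 < C₁.side := storing_quarter_lt hstγ
    obtain ⟨hdγ, hγψ⟩ := hside γ hγS
    obtain ⟨τ, hτS, hτc⟩ := hS2
    have hstτ := hst τ hτS
    rw [hτc] at hstτ
    have h2u : C₂.side ≤ τ.s := storing_side_le hstτ
    have h2l : τ.s / 4 < C₂.side := storing_quarter_lt hstτ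
    obtain ⟨hdτ, hτψ⟩ := hside τ hτS
    set l₁ := C₁.level with hl₁
    have p1 := two_zpow_pos l₁
    have p2 := two_zpow_pos l₂
    have hpγ : p ∈ γ.toSet := by
      have hcl : IsClosed γ.toSet := by
        unfold Square.toSet; exact isClosed_Icc.prod isClosed_Icc
      have h := frontier_subset_closure hpfr
      rwa [hcl.closure_eq] at h
    have hpx1 : γ.x ≤ p.1 := hpγ.1.1
    have hpx2 : p.1 ≤ γ.x + γ.s := hpγ.1.2
    have hpy1 : γ.y ≤ p.2 := hpγ.2.1
    have hpy2 : p.2 ≤ γ.y + γ.s := hpγ.2.2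
    have hc1γ := hstγ.2.1 (corner_mem C₁)
    have hax1 : γ.x ≤ (C₁.a : ℝ) * 2 ^ l₁ := hc1γ.1.1
    have hax2 : (C₁.a : ℝ) * 2 ^ l₁ ≤ γ.x + γ.s := hc1γ.1.2
    have hbx1 : γ.y ≤ (C₁.b : ℝ) * 2 ^ l₁ := hc1γ.2.1
    have hbx2 : (C₁.b : ℝ) * 2 ^ l₁ ≤ γ.y + γ.s := hc1γ.2.2
    have hpX : X ≤ p.1 := hp5.1.1
    have hpY : p.1 ≤ Y := hp5.1.2
    have hpU : U ≤ p.2 := hp5.2.1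
    have hpV : p.2 ≤ V := hp5.2.2
    have hγlt : γ.s < 4 * 2 ^ l₁ := by
      have : γ.s / 4 < 2 ^ l₁ := h1l
      linarith
    have h2γ : (2:ℝ) ^ l₂ ≤ γ.s := hPside
    have hll : l₂ - 1 ≤ l₁ := by
      have hlt : (2:ℝ) ^ l₂ < 2 ^ (l₁ + 2) := by
        have e : (2:ℝ) ^ (l₁ + 2) = 4 * 2 ^ l₁ := by
          rw [zpow_add₀ (by norm_num : (2:ℝ) ≠ 0)]; norm_num; ring
        rw [e]; linarith
      have := (zpow_lt_zpow_iff_right₀ (by norm_num : (1:ℝ) < 2)).mp hlt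
      omega
    have hτlt : τ.s < 4 * 2 ^ l₂ := by
      have : τ.s / 4 < 2 ^ l₂ := h2l
      linarith
    have h1ψd : (2:ℝ) ^ l₁ ≤ ψ * d := by
      have : C₁.side ≤ ψ * d := le_trans h1u hγψ
      exact this
    have hlu : l₁ ≤ l₂ + m := by
      have h4 : (2:ℝ) ^ l₁ ≤ ψ * (4 * 2 ^ l₂) := by
        have hd4 : d < 4 * 2 ^ l₂ := lt_of_le_of_lt hdτ hτlt
        have := mul_le_mul_of_nonneg_left hd4.le hψ0.le
        linarith [h1ψd]
      have key : (2:ℝ) ^ (l₁ - l₂ - 2) ≤ ψ := by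
        have e : (2:ℝ) ^ (l₁ - l₂ - 2) * (4 * 2 ^ l₂) = 2 ^ l₁ := by
          rw [show l₁ = (l₁ - l₂ - 2) + 2 + l₂ by ring]
          rw [zpow_add₀ (by norm_num : (2:ℝ) ≠ 0), zpow_add₀ (by norm_num : (2:ℝ) ≠ 0)]
          norm_num; ring
        refine le_of_mul_le_mul_right ?_ (show (0:ℝ) < 4 * 2 ^ l₂ by positivity)
        rw [e]
        linarith [h4]
      have hle : ((l₁ - l₂ - 2 : ℤ) : ℝ) ≤ Real.logb 2 ψ := by
        rw [Real.le_logb_iff_rpow_le (by norm_num) hψ0, Real.rpow_intCast]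
        exact key
      have := Int.le_floor.mpr hle
      omega
    have haL : ⌈X / 2 ^ l₁ - 4⌉ ≤ C₁.a := by
      rw [Int.ceil_le]
      have h0 : X ≤ (C₁.a : ℝ) * 2 ^ l₁ + 4 * 2 ^ l₁ := by
        linarith [hpX, hpx2, hax1, hγlt]
      have h' : X ≤ ((C₁.a : ℝ) + 4) * 2 ^ l₁ := by rw [add_mul]; exact h0
      have := (div_le_iff₀ p1).mpr h'
      linarith
    have haU : C₁.a ≤ ⌊Y / 2 ^ l₁ + 4⌋ := by
      rw [Int.le_floor]
      have h0 : (C₁.a : ℝ) * 2 ^ l₁ - 4 * 2 ^ l₁ ≤ Y := by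
        linarith [hpY, hpx1, hax2, hγlt]
      have h' : ((C₁.a : ℝ) - 4) * 2 ^ l₁ ≤ Y := by rw [sub_mul]; exact h0
      have := (le_div_iff₀ p1).mpr h'
      linarith
    have hbL : ⌈U / 2 ^ l₁ - 4⌉ ≤ C₁.b := by
      rw [Int.ceil_le]
      have h0 : U ≤ (C₁.b : ℝ) * 2 ^ l₁ + 4 * 2 ^ l₁ := by
        linarith [hpU, hpy2, hbx1, hγlt]
      have h' : U ≤ ((C₁.b : ℝ) + 4) * 2 ^ l₁ := by rw [add_mul]; exact h0
      have := (div_le_iff₀ p1).mpr h'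
      linarith
    have hbU : C₁.b ≤ ⌊V / 2 ^ l₁ + 4⌋ := by
      rw [Int.le_floor]
      have h0 : (C₁.b : ℝ) * 2 ^ l₁ - 4 * 2 ^ l₁ ≤ V := by
        linarith [hpV, hpy1, hbx2, hγlt]
      have h' : ((C₁.b : ℝ) - 4) * 2 ^ l₁ ≤ V := by rw [sub_mul]; exact h0
      have := (le_div_iff₀ p1).mpr h'
      linarith
    rw [hF]
    apply Finset.mem_biUnion.mpr
    refine ⟨l₁, Finset.mem_Icc.mpr ⟨hll, hlu⟩, ?_⟩
    apply Finset.mem_image.mpr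
    exact ⟨(C₁.a, C₁.b), Finset.mem_product.mpr
      ⟨Finset.mem_Icc.mpr ⟨haL, haU⟩, Finset.mem_Icc.mpr ⟨hbL, hbU⟩⟩, rfl⟩
  have hlevelcard : (Finset.Icc (l₂ - 1) (l₂ + m)).card = (m + 2).toNat := by
    rw [Int.card_Icc]
    congr 1
    ring
  have hFcard : F.card ≤ (m + 2).toNat * 361 := by
    calc F.card ≤ ∑ l ∈ Finset.Icc (l₂ - 1) (l₂ + m),
        (((Finset.Icc ⌈X / 2 ^ l - 4⌉ ⌊Y / 2 ^ l + 4⌋) ×ˢ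
         (Finset.Icc ⌈U / 2 ^ l - 4⌉ ⌊V / 2 ^ l + 4⌋)).image
          (fun q => DyadicCell.mk l q.1 q.2)).card := Finset.card_biUnion_le
      _ ≤ ∑ l ∈ Finset.Icc (l₂ - 1) (l₂ + m), 361 := by
          apply Finset.sum_le_sum
          intro l hl
          have hl2 : l₂ ≤ l + 1 := by
            rw [Finset.mem_Icc] at hl; omega
          have hpow : (2:ℝ) ^ l₂ ≤ 2 * 2 ^ l := by
            have h := zpow_le_zpow_right₀ (by norm_num : (1:ℝ) ≤ 2) hl2
            rw [zpow_add₀ (by norm_num : (2:ℝ) ≠ 0)] at h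
            linarith
          have hpl := two_zpow_pos l
          have cardbound : ∀ (A B : ℝ), B - A = 5 * 2 ^ l₂ →
              (Finset.Icc ⌈A / 2 ^ l - 4⌉ ⌊B / 2 ^ l + 4⌋).card ≤ 19 := by
            intro A B hAB
            rw [Int.card_Icc]
            rw [Int.toNat_le]
            have f1 : (⌊B / 2 ^ l + 4⌋ : ℝ) ≤ B / 2 ^ l + 4 := Int.floor_le _
            have f2 : A / 2 ^ l - 4 ≤ (⌈A / 2 ^ l - 4⌉ : ℝ) := Int.le_ceil _
            have h3 : B / 2 ^ l - A / 2 ^ l ≤ 10 := by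
              rw [div_sub_div_same, hAB, div_le_iff₀ hpl]
              linarith
            have : ((⌊B / 2 ^ l + 4⌋ + 1 - ⌈A / 2 ^ l - 4⌉ : ℤ) : ℝ) ≤ (19 : ℝ) := by
              push_cast
              linarith
            exact_mod_cast this
          calc (((Finset.Icc ⌈X / 2 ^ l - 4⌉ ⌊Y / 2 ^ l + 4⌋) ×ˢ
               (Finset.Icc ⌈U / 2 ^ l - 4⌉ ⌊V / 2 ^ l + 4⌋)).image
                (fun q => DyadicCell.mk l q.1 q.2)).card
              ≤ ((Finset.Icc ⌈X / 2 ^ l - 4⌉ ⌊Y / 2 ^ l + 4⌋) ×ˢ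
               (Finset.Icc ⌈U / 2 ^ l - 4⌉ ⌊V / 2 ^ l + 4⌋)).card := Finset.card_image_le
            _ = (Finset.Icc ⌈X / 2 ^ l - 4⌉ ⌊Y / 2 ^ l + 4⌋).card *
                (Finset.Icc ⌈U / 2 ^ l - 4⌉ ⌊V / 2 ^ l + 4⌋).card := Finset.card_product _ _
            _ ≤ 19 * 19 := Nat.mul_le_mul (cardbound X Y (by rw [hX, hY]; ring))
                (cardbound U V (by rw [hU, hV]; ring))
            _ = 361 := by norm_num
      _ = (Finset.Icc (l₂ - 1) (l₂ + m)).card * 361 := by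
          rw [Finset.sum_const, smul_eq_mul]
      _ = (m + 2).toNat * 361 := by rw [hlevelcard]
  have hTle : (((S.image c).filter (fun C₁ => M C₁ C₂ ≠ ∅)).card : ℝ) ≤
      ((m + 2).toNat * 361 : ℕ) := by
    exact_mod_cast le_trans (Finset.card_le_card hsub) hFcard
  have hcast : (((m + 2).toNat * 361 : ℕ) : ℝ) = ((m : ℝ) + 2) * 361 := by
    have h1 : ((m + 2).toNat : ℤ) = m + 2 := Int.toNat_of_nonneg (by omega)
    have h2 : (((m + 2).toNat : ℤ) : ℝ) = (m : ℝ) + 2 := by rw [h1]; push_cast; ring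
    push_cast at h2 ⊢
    rw [h2]
  rw [hcast] at hTle
  have hfloor : ((⌊Real.logb 2 ψ⌋ : ℤ) : ℝ) ≤ Real.logb 2 ψ := Int.floor_le _
  have : ((m : ℝ) + 2) * 361 ≤ 1444 * (Real.logb 2 ψ + 1) := by
    rw [hm]
    push_cast
    linarith
  linarith

theorem statement17 : ∃ cst : ℝ, 0 < cst ∧
    ∀ (S : Finset Square) (n : ℕ), S.card = n →
    ∀ (c : Square → DyadicCell), (∀ σ ∈ S, IsStoringCell σ (c σ)) →
    ∀ (d ψ : ℝ), 0 < d → 1 ≤ ψ → (∀ σ ∈ S, d ≤ σ.s ∧ σ.s ≤ ψ * d) →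
    ∀ (M : DyadicCell → DyadicCell → Finset (Square × Square)),
      -- each `M C₁ C₂` consists of pairs from `π(C₁) × π(C₂)`
      (∀ C₁ C₂, ∀ p ∈ M C₁ C₂, p.1 ∈ piCell S c C₁ ∧ p.2 ∈ piCell S c C₂) →
      -- each `M C₁ C₂` is a partial matching: every square occurs as a coordinate
      -- of at most one pair
      (∀ C₁ C₂, ∀ p ∈ M C₁ C₂, ∀ q ∈ M C₁ C₂,
        (p.1 = q.1 ∨ p.1 = q.2 ∨ p.2 = q.1 ∨ p.2 = q.2) → p = q) →
      -- matchings only for ordered pairs of storing cells with `C₂ ∈ 𝒫(π(C₁))`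
      (∀ C₁ C₂, ¬ (IsStoringCellOf S c C₁ ∧ IsStoringCellOf S c C₂ ∧
        ∃ γ ∈ piCell S c C₁, C₂ ∈ calP S c γ) → M C₁ C₂ = ∅) →
      (∑ p ∈ (S.image c) ×ˢ (S.image c), ((M p.1 p.2).card : ℝ)) ≤
        cst * n * (Real.logb 2 ψ + 1) := by
  classical
  refine ⟨1444, by norm_num, ?_⟩
  intro S n hn c hst d ψ hd hψ hside M hMmem hMmatch hMzero
  set A := S.image c with hA
  have hlog0 : 0 ≤ Real.logb 2 ψ := Real.logb_nonneg (by norm_num) hψ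
  have hMcard : ∀ C₁ C₂ : DyadicCell,
      (M C₁ C₂).card ≤ (S.filter (fun σ => c σ = C₂)).card := by
    intro C₁ C₂
    apply Finset.card_le_card_of_injOn Prod.snd
    · intro p hp
      have h := (hMmem C₁ C₂ p hp).2
      exact Finset.mem_filter.mpr ⟨h.1, h.2⟩
    · intro p hp q hq hpq
      exact hMmatch C₁ C₂ p hp q hq (Or.inr (Or.inr (Or.inr hpq)))
  have hsum : (∑ p ∈ A ×ˢ A, ((M p.1 p.2).card : ℝ))
      = ∑ C₂ ∈ A, ∑ C₁ ∈ A, ((M C₁ C₂).card : ℝ) := by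
    rw [Finset.sum_product (f := fun p => ((M p.1 p.2).card : ℝ))]
    exact Finset.sum_comm
  rw [hsum]
  have inner : ∀ C₂ ∈ A, (∑ C₁ ∈ A, ((M C₁ C₂).card : ℝ))
      ≤ (1444 * (Real.logb 2 ψ + 1)) * ((S.filter (fun σ => c σ = C₂)).card : ℝ) := by
    intro C₂ hC₂
    have hfilt : (∑ C₁ ∈ A.filter (fun C₁ => M C₁ C₂ ≠ ∅), ((M C₁ C₂).card : ℝ))
        = ∑ C₁ ∈ A, ((M C₁ C₂).card : ℝ) := by
      apply Finset.sum_filter_of_ne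
      intro x hx hne h0
      rw [h0] at hne
      simp at hne
    rw [← hfilt]
    calc (∑ C₁ ∈ A.filter (fun C₁ => M C₁ C₂ ≠ ∅), ((M C₁ C₂).card : ℝ))
        ≤ ∑ C₁ ∈ A.filter (fun C₁ => M C₁ C₂ ≠ ∅),
            ((S.filter (fun σ => c σ = C₂)).card : ℝ) := by
          apply Finset.sum_le_sum
          intro i hi
          exact_mod_cast hMcard i C₂
      _ = ((A.filter (fun C₁ => M C₁ C₂ ≠ ∅)).card : ℝ) *
            ((S.filter (fun σ => c σ = C₂)).card : ℝ) := by
          rw [Finset.sum_const, nsmul_eq_mul]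
      _ ≤ (1444 * (Real.logb 2 ψ + 1)) * ((S.filter (fun σ => c σ = C₂)).card : ℝ) := by
          apply mul_le_mul_of_nonneg_right _ (by positivity)
          exact count_bound S c hst d ψ hd hψ hside M hMzero C₂
  calc (∑ C₂ ∈ A, ∑ C₁ ∈ A, ((M C₁ C₂).card : ℝ))
      ≤ ∑ C₂ ∈ A, (1444 * (Real.logb 2 ψ + 1)) *
          ((S.filter (fun σ => c σ = C₂)).card : ℝ) := Finset.sum_le_sum inner
    _ = (1444 * (Real.logb 2 ψ + 1)) *
          ∑ C₂ ∈ A, ((S.filter (fun σ => c σ = C₂)).card : ℝ) := by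
        rw [Finset.mul_sum]
    _ = (1444 * (Real.logb 2 ψ + 1)) * n := by
        congr 1
        have h := Finset.card_eq_sum_card_image c S
        rw [← hn]
        rw [h]
        push_cast
        rfl
    _ = 1444 * n * (Real.logb 2 ψ + 1) := by ring
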